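/- Under the same assumptions, P[ζ(τ) ≥ n] ~ θ p_1(0)/(n^{1/θ} h(n)) as n → ∞. In particular P[ζ(τ) ≥ n]/(n P[ζ(τ)=n]) → θ. -/

import Mathlib

/-
With `α = 1 / θ` and `f k = r k * c * k ^ (-(1 + α)) / h k`, where `r k → 1`, Potter's bounds
`h n / h k ∈ [(e * k / n) ^ (-δ), (e * k / n) ^ δ]` for large `n ≤ k` squeeze
`n ^ α * h n / c * ∑_{k ≥ n} f k` between the two quantities
`(1 ∓ δ) e^{∓δ} n ^ (α ± δ) ∑_{k ≥ n} k ^ (-(1 + (α ± δ)))`. By the integral test these tend to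
`(1 ∓ δ) e^{∓δ} / (α ± δ)`, and letting `δ → 0` gives the limit `1 / α = θ`.

Potter's bounds follow from Karamata's uniform convergence theorem for `L = log ∘ h ∘ exp`: for
large `x` the set of `w ∈ [-1, 1]` with `|L (x + w) - L x| ≥ ε / 2` has small measure, so for
every `u ∈ [0, 1]` some `w ∈ [0, 1]` is good both for `x` and for `x + u`, and `w` links
`L (x + u)` to `L x`.
-/

open Filter

/-- A positive measurable function is slowly varying if it is eventually positive
and h(tx)/h(x) → 1 as x → ∞ for all t > 0. -/
def SlowlyVarying (h : ℝ → ℝ) : Prop :=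
  (∀ᶠ x in atTop, 0 < h x) ∧
    ∀ t : ℝ, 0 < t → Tendsto (fun x => h (t * x) / h x) atTop (nhds 1)

open Topology Set MeasureTheory Real

theorem tendsto_of_eventually_sandwich {ι κ α : Type*} [TopologicalSpace α] [LinearOrder α]
    [OrderTopology α] {p : Filter ι} {q : Filter κ} [q.NeBot] {a : ι → α}
    {lo hi : κ → ι → α} {Lo Hi : κ → α} {L : α}
    (hlo : ∀ᶠ δ in q, Tendsto (lo δ) p (𝓝 (Lo δ))) (hhi : ∀ᶠ δ in q, Tendsto (hi δ) p (𝓝 (Hi δ)))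
    (hLo : Tendsto Lo q (𝓝 L)) (hHi : Tendsto Hi q (𝓝 L))
    (hbound : ∀ᶠ δ in q, ∀ᶠ i in p, lo δ i ≤ a i ∧ a i ≤ hi δ i) :
    Tendsto a p (𝓝 L) := by
  refine tendsto_order.2 ⟨fun b hb => ?_, fun b hb => ?_⟩
  · obtain ⟨δ, hδb, hδlo, hδ⟩ := ((hLo.eventually (lt_mem_nhds hb)).and (hlo.and hbound)).exists
    filter_upwards [hδlo.eventually (lt_mem_nhds hδb), hδ] with i hi hbi using hi.trans_le hbi.1
  · obtain ⟨δ, hδb, hδhi, hδ⟩ := ((hHi.eventually (gt_mem_nhds hb)).and (hhi.and hbound)).exists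
    filter_upwards [hδhi.eventually (gt_mem_nhds hδb), hδ] with i hi hbi using hbi.2.trans_lt hi

theorem tsum_subtype_le_eq_tsum_add {α : Type*} [AddCommMonoid α] [TopologicalSpace α]
    (g : ℕ → α) (n : ℕ) : ∑' k : {k : ℕ // n ≤ k}, g k = ∑' j : ℕ, g (j + n) :=
  (Equiv.tsum_eq ⟨fun j => ⟨j + n, Nat.le_add_left n j⟩, fun k => k.1 - n,
    fun j => by simp, fun k => Subtype.ext (Nat.sub_add_cancel k.2)⟩ (fun k => g k.1)).symm

section PowerTail

variable {β : ℝ}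

theorem summable_rpow_neg_one_sub_comp_add (hβ : 0 < β) (n : ℕ) :
    Summable fun j : ℕ => ((j + n : ℕ) : ℝ) ^ (-(1 + β)) :=
  (summable_nat_add_iff n).2 (Real.summable_nat_rpow.2 (by linarith))

theorem integral_Ioi_rpow_neg_one_sub (hβ : 0 < β) {x : ℝ} (hx : 0 < x) :
    ∫ t in Ioi x, t ^ (-(1 + β)) = x ^ (-β) / β := by
  rw [integral_Ioi_rpow_of_lt (by linarith) hx, show -(1 + β) + 1 = -β by ring, neg_div_neg_eq]

theorem antitoneOn_rpow_neg_one_sub (hβ : 0 < β) {x : ℝ} (hx : 0 < x) :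
    AntitoneOn (fun t : ℝ => t ^ (-(1 + β))) (Ici x) := fun s hs t _ hst =>
  rpow_le_rpow_of_nonpos (hx.trans_le hs) hst (by linarith)

theorem rpow_neg_div_le_tsum_comp_add (hβ : 0 < β) {n : ℕ} (hn : 0 < n) :
    (n : ℝ) ^ (-β) / β ≤ ∑' j : ℕ, ((j + n : ℕ) : ℝ) ^ (-(1 + β)) := by
  have hn' : (0 : ℝ) < n := Nat.cast_pos.2 hn
  rw [← integral_Ioi_rpow_neg_one_sub hβ hn']
  exact (antitoneOn_rpow_neg_one_sub hβ hn').integral_le_tsum_comp_add n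
    (Real.summable_nat_rpow.2 (by linarith)) fun t ht => rpow_nonneg (hn'.trans ht).le _

theorem tsum_comp_add_le_rpow_add_rpow_neg_div (hβ : 0 < β) {n : ℕ} (hn : 0 < n) :
    ∑' j : ℕ, ((j + n : ℕ) : ℝ) ^ (-(1 + β)) ≤ (n : ℝ) ^ (-(1 + β)) + (n : ℝ) ^ (-β) / β := by
  have hn' : (0 : ℝ) < n := Nat.cast_pos.2 hn
  rw [(summable_rpow_neg_one_sub_comp_add hβ n).tsum_eq_zero_add,
    ← integral_Ioi_rpow_neg_one_sub hβ hn']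
  refine add_le_add (by simp) ?_
  simp_rw [Nat.add_right_comm _ 1 n]
  exact (antitoneOn_rpow_neg_one_sub hβ hn').tsum_comp_add_le_integral n
    (integrableOn_Ioi_rpow_of_lt (by linarith) hn') fun t ht => rpow_nonneg (hn'.trans ht).le _

theorem tendsto_rpow_mul_tsum_tail_rpow (hβ : 0 < β) :
    Tendsto (fun n : ℕ => (n : ℝ) ^ β * ∑' k : {k : ℕ // n ≤ k}, (k : ℝ) ^ (-(1 + β)))
      atTop (𝓝 (1 / β)) := by
  have hupper : Tendsto (fun n : ℕ => (n : ℝ)⁻¹ + 1 / β) atTop (𝓝 (1 / β)) := by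
    simpa using (tendsto_inv_atTop_nhds_zero_nat (𝕜 := ℝ)).add_const (1 / β)
  refine tendsto_of_tendsto_of_tendsto_of_le_of_le' tendsto_const_nhds hupper ?_ ?_
  all_goals
    filter_upwards [eventually_gt_atTop 0] with n hn
    have hn' : (0 : ℝ) < n := Nat.cast_pos.2 hn
    rw [tsum_subtype_le_eq_tsum_add (fun k : ℕ => (k : ℝ) ^ (-(1 + β)))]
  · calc 1 / β = (n : ℝ) ^ β * ((n : ℝ) ^ (-β) / β) := by
          rw [rpow_neg hn'.le]; field_simp
      _ ≤ _ := by gcongr; exact rpow_neg_div_le_tsum_comp_add hβ hn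
  · calc _ ≤ (n : ℝ) ^ β * ((n : ℝ) ^ (-(1 + β)) + (n : ℝ) ^ (-β) / β) := by
          gcongr; exact tsum_comp_add_le_rpow_add_rpow_neg_div hβ hn
      _ = (n : ℝ)⁻¹ + 1 / β := by
          rw [rpow_neg hn'.le, rpow_neg hn'.le, rpow_add hn', rpow_one]
          field_simp

end PowerTail

theorem exists_mem_notMem_of_measure_add_lt {G : Type*} [MeasurableSpace G] [AddGroup G]
    [MeasurableAdd G] {μ : Measure G} [μ.IsAddRightInvariant] {I s t : Set G} (u : G)
    (h : μ s + μ t < μ I) : ∃ w ∈ I, w ∉ s ∧ w - u ∉ t := by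
  by_contra! hcover
  have hI : I ⊆ s ∪ (· + -u) ⁻¹' t := fun w hw => by
    by_cases hws : w ∈ s
    · exact Or.inl hws
    · exact Or.inr (by simpa [← sub_eq_add_neg] using hcover w hw hws)
  refine h.not_ge ((measure_mono hI).trans ((measure_union_le _ _).trans_eq ?_))
  rw [measure_preimage_add_right]

section UniformConvergence

variable {L : ℝ → ℝ}

theorem tendsto_volume_setOf_le_abs_sub (hL : Measurable L)
    (hlim : ∀ a, Tendsto (fun x => L (x + a) - L x) atTop (𝓝 0)) {ε : ℝ} (hε : 0 < ε)
    {s : Set ℝ} (hs : MeasurableSet s) (hs' : volume s ≠ ⊤) :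
    Tendsto (fun x => volume ({w | ε ≤ |L (x + w) - L x|} ∩ s)) atTop (𝓝 0) := by
  have hmeas : ∀ x, MeasurableSet ({w | ε ≤ |L (x + w) - L x|} ∩ s) := fun x =>
    (measurableSet_le measurable_const
      ((hL.comp (measurable_const_add x)).sub_const (L x)).abs).inter hs
  have hsmall : ∀ v, ∀ᶠ x in atTop, v ∉ {w | ε ≤ |L (x + w) - L x|} ∩ s := fun v => by
    have := (hlim v).abs
    rw [abs_zero] at this
    filter_upwards [this.eventually (gt_mem_nhds hε)] with x hx hv using hv.1.not_gt hx
  simpa using tendsto_measure_of_ae_tendsto_indicator atTop MeasurableSet.empty hmeas hs hs'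
    (Eventually.of_forall fun x => inter_subset_right)
    (ae_of_all _ fun v => (hsmall v).mono fun x hx => by simpa using hx)

/-- Karamata's uniform convergence theorem, in additive form (`L = log ∘ h ∘ exp`). -/
theorem tendstoUniformlyOn_sub_of_tendsto_sub (hL : Measurable L)
    (hlim : ∀ a, Tendsto (fun x => L (x + a) - L x) atTop (𝓝 0)) :
    TendstoUniformlyOn (fun x u => L (x + u) - L x) 0 atTop (Icc 0 1) := by
  rw [Metric.tendstoUniformlyOn_iff]
  intro ε hε
  set B : ℝ → Set ℝ := fun x => {w | ε / 2 ≤ |L (x + w) - L x|} ∩ Icc (-1) 1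
  obtain ⟨X, hX⟩ := eventually_atTop.1 <|
    (tendsto_volume_setOf_le_abs_sub hL hlim (half_pos hε) measurableSet_Icc (by simp)).eventually
      (gt_mem_nhds (by norm_num : (0 : ENNReal) < 2⁻¹))
  filter_upwards [eventually_ge_atTop X] with x hx u hu
  have hvol : volume (B x) + volume (B (x + u)) < volume (Icc (0 : ℝ) 1) := by
    rw [Real.volume_Icc, sub_zero, ENNReal.ofReal_one, ← ENNReal.inv_two_add_inv_two]
    exact ENNReal.add_lt_add (hX x hx) (hX (x + u) (by linarith [hu.1]))
  obtain ⟨w, hw, hwx, hwy⟩ := exists_mem_notMem_of_measure_add_lt u hvol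
  have h1 : |L (x + w) - L x| < ε / 2 := by
    by_contra! h
    exact hwx ⟨h, by linarith [hw.1], hw.2⟩
  have h2 : |L (x + w) - L (x + u)| < ε / 2 := by
    by_contra! h
    refine hwy ⟨?_, by linarith [hu.2, hw.1], by linarith [hu.1, hw.2]⟩
    show ε / 2 ≤ |L (x + u + (w - u)) - L (x + u)|
    rwa [show x + u + (w - u) = x + w by ring]
  rw [Pi.zero_apply, dist_zero_left, Real.norm_eq_abs]
  calc |L (x + u) - L x| = |(L (x + w) - L x) - (L (x + w) - L (x + u))| := by ring_nf
    _ ≤ |L (x + w) - L x| + |L (x + w) - L (x + u)| := abs_sub _ _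
    _ < ε := by linarith

theorem exists_abs_sub_le_mul_add_one (hL : Measurable L)
    (hlim : ∀ a, Tendsto (fun x => L (x + a) - L x) atTop (𝓝 0)) {δ : ℝ} (hδ : 0 < δ) :
    ∃ Y, ∀ y ≥ Y, ∀ s ≥ 0, |L (y + s) - L y| ≤ δ * (s + 1) := by
  obtain ⟨Y, hY⟩ := eventually_atTop.1
    (Metric.tendstoUniformlyOn_iff.1 (tendstoUniformlyOn_sub_of_tendsto_sub hL hlim) δ hδ)
  have hstep : ∀ y ≥ Y, ∀ u ∈ Icc (0 : ℝ) 1, |L (y + u) - L y| ≤ δ := fun y hy u hu => by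
    simpa [Real.dist_eq, abs_sub_comm] using (hY y hy u hu).le
  have hchain : ∀ m : ℕ, ∀ y ≥ Y, ∀ s ∈ Icc (0 : ℝ) (m + 1), |L (y + s) - L y| ≤ δ * (m + 1) := by
    intro m
    induction m with
    | zero => simpa using hstep
    | succ m ih =>
      intro y hy s hs
      push_cast
      rcases le_or_gt s 1 with hs1 | hs1
      · nlinarith [hstep y hy s ⟨hs.1, hs1⟩, (m.cast_nonneg : (0 : ℝ) ≤ m)]
      · push_cast at hs
        have h1 := ih (y + 1) (by linarith) (s - 1) ⟨by linarith, by linarith [hs.2]⟩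
        rw [show y + 1 + (s - 1) = y + s by ring] at h1
        calc |L (y + s) - L y| ≤ |L (y + s) - L (y + 1)| + |L (y + 1) - L y| := abs_sub_le _ _ _
          _ ≤ δ * (m + 1) + δ := add_le_add h1 (hstep y hy 1 ⟨zero_le_one, le_rfl⟩)
          _ = δ * (m + 1 + 1) := by ring
  refine ⟨Y, fun y hy s hs => (hchain ⌊s⌋₊ y hy s ⟨hs, (Nat.lt_floor_add_one s).le⟩).trans ?_⟩
  gcongr
  exact Nat.floor_le hs

end UniformConvergence

namespace SlowlyVarying

variable {h : ℝ → ℝ}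

theorem tendsto_log_comp_exp_add_sub (hs : SlowlyVarying h) (a : ℝ) :
    Tendsto (fun y => log (h (exp (y + a))) - log (h (exp y))) atTop (𝓝 0) := by
  have hratio := ((continuousAt_log one_ne_zero).tendsto.comp
    ((hs.2 (exp a) (exp_pos a)).comp tendsto_exp_atTop))
  rw [log_one] at hratio
  refine hratio.congr' ?_
  filter_upwards [tendsto_exp_atTop.eventually hs.1,
    (tendsto_exp_atTop.comp (tendsto_atTop_add_const_right _ a tendsto_id)).eventually hs.1]
    with y hy hya
  simp only [Function.comp_apply, id] at hya ⊢
  rw [← log_div hya.ne' hy.ne', exp_add, mul_comm]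

theorem exists_potter_bounds (hs : SlowlyVarying h) (hh : Measurable h) {δ : ℝ} (hδ : 0 < δ) :
    ∃ X > 0, ∀ x ≥ X, 0 < h x ∧ ∀ y ≥ x,
      exp (-δ) * (y / x) ^ (-δ) ≤ h x / h y ∧ h x / h y ≤ exp δ * (y / x) ^ δ := by
  obtain ⟨Y, hY⟩ := exists_abs_sub_le_mul_add_one (hh.comp measurable_exp).log
    hs.tendsto_log_comp_exp_add_sub hδ
  obtain ⟨X₀, hX₀⟩ := eventually_atTop.1 hs.1
  refine ⟨max (max X₀ 1) (exp Y), by positivity, fun x hx => ?_⟩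
  simp only [ge_iff_le, max_le_iff] at hx
  have hx0 : 0 < x := by linarith
  refine ⟨hX₀ x hx.1.1, fun y hy => ?_⟩
  have hy0 : 0 < y := by linarith
  have hlog : |log (h x) - log (h y)| ≤ δ * log (y / x) + δ := by
    have := hY (log x) ((le_log_iff_exp_le hx0).2 hx.2) (log (y / x))
      (log_nonneg ((one_le_div hx0).2 hy))
    simp only [Function.comp_apply] at this
    rwa [← log_mul hx0.ne' (div_pos hy0 hx0).ne', mul_div_cancel₀ _ hx0.ne', exp_log hy0,
      exp_log hx0, abs_sub_comm, mul_add, mul_one] at this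
  have hratio : h x / h y = exp (log (h x) - log (h y)) := by
    rw [exp_sub, exp_log (hX₀ x hx.1.1), exp_log (hX₀ y (by linarith))]
  have hpow : ∀ s, exp s * (y / x) ^ s = exp (s * log (y / x) + s) := fun s => by
    rw [rpow_def_of_pos (div_pos hy0 hx0), ← exp_add, mul_comm s, add_comm]
  rw [hratio, hpow, hpow, exp_le_exp, exp_le_exp]
  constructor <;> linarith [abs_le.1 hlog]

end SlowlyVarying

theorem div_rpow_mul_rpow_mul_rpow_neg {x y : ℝ} (hx : 0 < x) (hy : 0 < y) (α s : ℝ) :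
    (y / x) ^ s * (x ^ α * y ^ (-(1 + α))) = x ^ (α - s) * y ^ (-(1 + (α - s))) := by
  rw [div_rpow hy.le hx.le, rpow_sub hx, rpow_neg hy.le, rpow_neg hy.le, rpow_add hy, rpow_add hy,
    rpow_sub hy]
  field_simp

theorem tail_term_sandwich {α c δ x y hx hy F : ℝ} (hc : 0 < c) (hx0 : 0 < x) (hy0 : 0 < y)
    (hhx : 0 < hx) (hhy : 0 < hy) (hr : F / (c / (y ^ (1 + α) * hy)) ∈ Ioo (1 - δ) (1 + δ))
    (hpotter : exp (-δ) * (y / x) ^ (-δ) ≤ hx / hy ∧ hx / hy ≤ exp δ * (y / x) ^ δ)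
    (hδ : δ ∈ Ioo 0 1) :
    (1 - δ) * exp (-δ) * (x ^ (α + δ) * y ^ (-(1 + (α + δ)))) ≤ x ^ α * hx / c * F ∧
      x ^ α * hx / c * F ≤ (1 + δ) * exp δ * (x ^ (α - δ) * y ^ (-(1 + (α - δ)))) := by
  have heq : x ^ α * hx / c * F =
      F / (c / (y ^ (1 + α) * hy)) * (hx / hy) * (x ^ α * y ^ (-(1 + α))) := by
    rw [rpow_neg hy0.le]
    field_simp
  rw [heq]
  constructor
  · calc
      _ = (1 - δ) * exp (-δ) * ((y / x) ^ (-δ) * (x ^ α * y ^ (-(1 + α)))) := by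
        rw [div_rpow_mul_rpow_mul_rpow_neg hx0 hy0, sub_neg_eq_add]
      _ = (1 - δ) * (exp (-δ) * (y / x) ^ (-δ)) * (x ^ α * y ^ (-(1 + α))) := by ring
      _ ≤ _ := by gcongr <;> linarith [hr.1, hpotter.1, hδ.2]
  · calc
      _ ≤ (1 + δ) * (exp δ * (y / x) ^ δ) * (x ^ α * y ^ (-(1 + α))) := by
        gcongr <;> linarith [hr.2, hpotter.2, hδ.1]
      _ = (1 + δ) * exp δ * ((y / x) ^ δ * (x ^ α * y ^ (-(1 + α)))) := by ring
      _ = _ := by rw [div_rpow_mul_rpow_mul_rpow_neg hx0 hy0]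

section TailAsymptotics

variable {α c δ : ℝ} {h : ℝ → ℝ} {f : ℕ → ℝ}

theorem eventually_tail_sandwich (hc : 0 < c) (hh : Measurable h) (hs : SlowlyVarying h)
    (hf0 : ∀ n, 0 ≤ f n)
    (hf : Tendsto (fun n : ℕ => f n / (c / ((n : ℝ) ^ (1 + α) * h n))) atTop (𝓝 1))
    (hδ : δ ∈ Ioo 0 1) (hδα : δ < α) :
    ∀ᶠ n : ℕ in atTop,
      (1 - δ) * exp (-δ) *
          ((n : ℝ) ^ (α + δ) * ∑' k : {k : ℕ // n ≤ k}, (k : ℝ) ^ (-(1 + (α + δ)))) ≤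
        (n : ℝ) ^ α * h n / c * ∑' k : {k : ℕ // n ≤ k}, f k ∧
      (n : ℝ) ^ α * h n / c * ∑' k : {k : ℕ // n ≤ k}, f k ≤
        (1 + δ) * exp δ *
          ((n : ℝ) ^ (α - δ) * ∑' k : {k : ℕ // n ≤ k}, (k : ℝ) ^ (-(1 + (α - δ)))) := by
  have hδ0 := hδ.1
  obtain ⟨X, hX0, hX⟩ := hs.exists_potter_bounds hh hδ0
  obtain ⟨N, hN⟩ := eventually_atTop.1 (hf.eventually
    (Ioo_mem_nhds (by linarith : 1 - δ < 1) (by linarith : (1 : ℝ) < 1 + δ)))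
  filter_upwards [eventually_ge_atTop N, tendsto_natCast_atTop_atTop.eventually_ge_atTop X]
    with n hnN hnX
  obtain ⟨hhn, hpotter⟩ := hX n hnX
  have hn0 : (0 : ℝ) < n := hX0.trans_le hnX
  have hnk : ∀ k : {k : ℕ // n ≤ k}, (n : ℝ) ≤ k := fun k => Nat.cast_le.2 k.2
  have hterm (k : {k : ℕ // n ≤ k}) :=
    tail_term_sandwich hc hn0 (hn0.trans_le (hnk k)) hhn (hX k (hnX.trans (hnk k))).1
      (hN k (hnN.trans k.2)) (hpotter k (hnk k)) hδ
  have hsum (β : ℝ) (hβ : 0 < β) : Summable fun k : {k : ℕ // n ≤ k} => (k : ℝ) ^ (-(1 + β)) :=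
    (Real.summable_nat_rpow.2 (by linarith)).subtype _
  have hlo := ((hsum (α + δ) (by linarith)).mul_left ((n : ℝ) ^ (α + δ))).mul_left
    ((1 - δ) * exp (-δ))
  have hhi := ((hsum (α - δ) (by linarith)).mul_left ((n : ℝ) ^ (α - δ))).mul_left
    ((1 + δ) * exp δ)
  have hmid : Summable fun k : {k : ℕ // n ≤ k} => (n : ℝ) ^ α * h n / c * f k :=
    hhi.of_nonneg_of_le (fun k => mul_nonneg (by positivity) (hf0 k)) fun k => (hterm k).2
  simp_rw [← tsum_mul_left]
  exact ⟨hlo.tsum_le_tsum (fun k => (hterm k).1) hmid, hmid.tsum_le_tsum (fun k => (hterm k).2) hhi⟩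

theorem tendsto_rpow_mul_div_mul_tsum_tail (hα : 0 < α) (hc : 0 < c) (hh : Measurable h)
    (hs : SlowlyVarying h) (hf0 : ∀ n, 0 ≤ f n)
    (hf : Tendsto (fun n : ℕ => f n / (c / ((n : ℝ) ^ (1 + α) * h n))) atTop (𝓝 1)) :
    Tendsto (fun n : ℕ => (n : ℝ) ^ α * h n / c * ∑' k : {k : ℕ // n ≤ k}, f k)
      atTop (𝓝 (1 / α)) := by
  have hLo : ContinuousAt (fun δ : ℝ => (1 - δ) * exp (-δ) * (1 / (α + δ))) 0 := by
    fun_prop (disch := simp [hα.ne'])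
  have hHi : ContinuousAt (fun δ : ℝ => (1 + δ) * exp δ * (1 / (α - δ))) 0 := by
    fun_prop (disch := simp [hα.ne'])
  have hsmall : ∀ᶠ δ in 𝓝[>] (0 : ℝ), δ ∈ Ioo 0 (min α 1) := Ioo_mem_nhdsGT (by positivity)
  apply tendsto_of_eventually_sandwich (q := 𝓝[>] 0)
    (lo := fun δ (n : ℕ) => (1 - δ) * exp (-δ) *
      ((n : ℝ) ^ (α + δ) * ∑' k : {k : ℕ // n ≤ k}, (k : ℝ) ^ (-(1 + (α + δ)))))
    (hi := fun δ (n : ℕ) => (1 + δ) * exp δ *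
      ((n : ℝ) ^ (α - δ) * ∑' k : {k : ℕ // n ≤ k}, (k : ℝ) ^ (-(1 + (α - δ)))))
    (Lo := fun δ => (1 - δ) * exp (-δ) * (1 / (α + δ)))
    (Hi := fun δ => (1 + δ) * exp δ * (1 / (α - δ)))
  · filter_upwards [hsmall] with δ hδ
    exact (tendsto_rpow_mul_tsum_tail_rpow (by linarith [hδ.1])).const_mul _
  · filter_upwards [hsmall] with δ hδ
    exact (tendsto_rpow_mul_tsum_tail_rpow (by linarith [hδ.2, min_le_left α 1])).const_mul _
  · simpa using hLo.tendsto.mono_left nhdsWithin_le_nhds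
  · simpa using hHi.tendsto.mono_left nhdsWithin_le_nhds
  · filter_upwards [hsmall] with δ hδ
    exact eventually_tail_sandwich hc hh hs hf0 hf ⟨hδ.1, hδ.2.trans_le (min_le_right _ _)⟩
      (hδ.2.trans_le (min_le_left _ _))

end TailAsymptotics

theorem stmt14_general (θ : ℝ) (hθ1 : 1 < θ)
    (p1 : ℝ → ℝ) (hp10 : 0 < p1 0)
    (h : ℝ → ℝ) (hhmeas : Measurable h) (hslow : SlowlyVarying h)
    (f : ℕ → ℝ) (hfnonneg : ∀ n, 0 ≤ f n)
    (hasymp : Tendsto (fun n : ℕ => f n / (p1 0 / ((n : ℝ) ^ (1 + 1 / θ) * h n)))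
      atTop (nhds 1)) :
    Tendsto (fun n : ℕ => (∑' k : {k : ℕ // n ≤ k}, f k.1) /
        (θ * p1 0 / ((n : ℝ) ^ (1 / θ) * h n))) atTop (nhds 1) ∧
    Tendsto (fun n : ℕ => (∑' k : {k : ℕ // n ≤ k}, f k.1) / ((n : ℝ) * f n))
      atTop (nhds θ) := by
  have hθ : 0 < θ := by linarith
  have hnorm := (tendsto_rpow_mul_div_mul_tsum_tail (one_div_pos.2 hθ) hp10 hhmeas hslow hfnonneg
    hasymp).div_const θ
  rw [one_div_one_div, div_self hθ.ne'] at hnorm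
  have htail : Tendsto (fun n : ℕ => (∑' k : {k : ℕ // n ≤ k}, f k.1) /
      (θ * p1 0 / ((n : ℝ) ^ (1 / θ) * h n))) atTop (nhds 1) :=
    hnorm.congr fun n => by rw [div_div_eq_mul_div]; ring
  refine ⟨htail, ?_⟩
  have hratio := (htail.mul_const θ).div hasymp one_ne_zero
  rw [one_mul, div_one] at hratio
  refine hratio.congr' ?_
  filter_upwards [eventually_gt_atTop 0, tendsto_natCast_atTop_atTop.eventually hslow.1]
    with n hn hhn
  have hn' : (0 : ℝ) < n := Nat.cast_pos.2 hn
  simp only [Pi.div_apply]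
  rw [rpow_add hn', rpow_one]
  rcases eq_or_ne (f n) 0 with hf | hf
  · simp [hf]
  · field_simp

/-- Tail asymptotics: if f(n) = P[ζ(τ) = n] satisfies f(n) ~ p_1(0)/(n^{1+1/θ}h(n))
with h slowly varying and θ ∈ (1,2], then P[ζ(τ) ≥ n] = ∑_{k≥n} f(k)
~ θ p_1(0)/(n^{1/θ} h(n)); in particular P[ζ(τ) ≥ n]/(n P[ζ(τ) = n]) → θ. -/
theorem stmt14 (θ : ℝ) (hθ1 : 1 < θ) (hθ2 : θ ≤ 2)
    (p1 : ℝ → ℝ) (hp10 : 0 < p1 0)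
    (h : ℝ → ℝ) (hhmeas : Measurable h) (hslow : SlowlyVarying h)
    (f : ℕ → ℝ) (hfnonneg : ∀ n, 0 ≤ f n)
    (hasymp : Tendsto (fun n : ℕ => f n / (p1 0 / ((n : ℝ) ^ (1 + 1 / θ) * h n)))
      atTop (nhds 1)) :
    Tendsto (fun n : ℕ => (∑' k : {k : ℕ // n ≤ k}, f k.1) /
        (θ * p1 0 / ((n : ℝ) ^ (1 / θ) * h n))) atTop (nhds 1) ∧
    Tendsto (fun n : ℕ => (∑' k : {k : ℕ // n ≤ k}, f k.1) / ((n : ℝ) * f n))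
      atTop (nhds θ) :=
  stmt14_general θ hθ1 p1 hp10 h hhmeas hslow f hfnonneg hasymp
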